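/- Let (X, d) be a finite set with a distance function, n = |X| ≥ 3, m_2 = max_{x,y} d(x,y)², and let S ⊆ X with 2 ≤ |S| ≤ k, where 1 < k < |X|. For W ≥ 1 let w_W be the weight function with w_W(x) = W for x ∈ S and w_W(x) = 1 otherwise. If C is a k-clustering of X in which all elements of S lie in pairwise distinct clusters, then the k-means cost of C with respect to (w_W[X], d) is at most k·m_2·(n + n²/W). -/

import Mathlib

open Finset

/-- A weight function assigns a positive real weight to every point. -/
def IsWeight {X : Type*} (w : X → ℝ) : Prop := ∀ x, 0 < w x

/-- A k-clustering: a partition of `X` into `k` pairwise disjoint nonempty parts. -/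
def IsClustering {X : Type*} [Fintype X] [DecidableEq X]
    (C : Finset (Finset X)) (k : ℕ) : Prop :=
  C.card = k ∧ (∀ A ∈ C, A.Nonempty) ∧
  (∀ A ∈ C, ∀ B ∈ C, A ≠ B → Disjoint A B) ∧
  (∀ x : X, ∃ A ∈ C, x ∈ A)

/-- `x ∼_C y`: `x` and `y` lie in the same cluster of `C`. -/
def SameCluster {X : Type*} [DecidableEq X] (C : Finset (Finset X)) (x y : X) : Prop :=
  ∃ A ∈ C, x ∈ A ∧ y ∈ A

/-- The k-means cost of a clustering `C` of weighted data `(w[X], d)`: for each cluster, the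
sum over unordered pairs of distinct points of `d(x,y)² w(x) w(y)` (written as half the sum
over ordered pairs of distinct points), divided by the cluster weight. -/
noncomputable def kmeansCost {X : Type*} [DecidableEq X]
    (C : Finset (Finset X)) (w : X → ℝ) (d : X → X → ℝ) : ℝ :=
  ∑ A ∈ C, ((1 / 2) * ∑ p ∈ A.offDiag, d p.1 p.2 ^ 2 * w p.1 * w p.2) / (∑ x ∈ A, w x)

/-- The min-sum cost of a clustering `C` of weighted data `(w[X], d)`: the sum over clusters
of the sum over unordered pairs of distinct points of `d(x,y) w(x) w(y)`. -/
noncomputable def minSumCost {X : Type*} [DecidableEq X]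
    (C : Finset (Finset X)) (w : X → ℝ) (d : X → X → ℝ) : ℝ :=
  ∑ A ∈ C, (1 / 2) * ∑ p ∈ A.offDiag, d p.1 p.2 * w p.1 * w p.2

/-!
Every pair of distinct points in one cluster contains a point of weight `1`, so
`w x * w y ≤ w x + w y` on such pairs. Summing over a cluster `A` bounds its total pair weight by
`2 |A| w(A)`, hence its k-means contribution by `m₂ |A| ≤ m₂ n`; there are `k` clusters.
-/

lemma mul_le_add_of_eq_one_or_eq_one {a b : ℝ} (ha : 0 ≤ a) (hb : 0 ≤ b) (h : a = 1 ∨ b = 1) :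
    a * b ≤ a + b := by
  rcases h with rfl | rfl <;> linarith

lemma sum_offDiag_add_le {X : Type*} [DecidableEq X] (A : Finset X) (f : X → ℝ)
    (hf : ∀ x ∈ A, 0 ≤ f x) :
    ∑ p ∈ A.offDiag, (f p.1 + f p.2) ≤ 2 * #A * ∑ x ∈ A, f x := by
  calc ∑ p ∈ A.offDiag, (f p.1 + f p.2)
      ≤ ∑ p ∈ A ×ˢ A, (f p.1 + f p.2) := by
        refine sum_le_sum_of_subset_of_nonneg (fun p hp => ?_) fun p hp _ => ?_
        · obtain ⟨hx, hy, -⟩ := mem_offDiag.1 hp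
          exact mem_product.2 ⟨hx, hy⟩
        · obtain ⟨hx, hy⟩ := mem_product.1 hp
          exact add_nonneg (hf _ hx) (hf _ hy)
    _ = 2 * #A * ∑ x ∈ A, f x := by
        simp only [sum_product, sum_add_distrib, sum_const, nsmul_eq_mul, ← mul_sum]
        ring

lemma sum_offDiag_mul_le {X : Type*} [DecidableEq X] (A : Finset X) (w : X → ℝ)
    (hw : ∀ x ∈ A, 0 ≤ w x) (hone : ∀ x ∈ A, ∀ y ∈ A, x ≠ y → w x = 1 ∨ w y = 1) :
    ∑ p ∈ A.offDiag, w p.1 * w p.2 ≤ 2 * #A * ∑ x ∈ A, w x := by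
  refine (sum_le_sum fun p hp => ?_).trans (sum_offDiag_add_le A w hw)
  obtain ⟨hx, hy, hne⟩ := mem_offDiag.1 hp
  exact mul_le_add_of_eq_one_or_eq_one (hw _ hx) (hw _ hy) (hone _ hx _ hy hne)

lemma kmeansCost_le_of_weight_eq_one_or_eq_one {X : Type*} [Fintype X] [DecidableEq X]
    (C : Finset (Finset X)) (w : X → ℝ) (d : X → X → ℝ) (M : ℝ) (hw : ∀ x, 0 ≤ w x)
    (hM0 : 0 ≤ M) (hM : ∀ x y, d x y ^ 2 ≤ M)
    (hone : ∀ A ∈ C, ∀ x ∈ A, ∀ y ∈ A, x ≠ y → w x = 1 ∨ w y = 1) :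
    kmeansCost C w d ≤ #C * M * Fintype.card X := by
  rw [kmeansCost, mul_assoc, ← nsmul_eq_mul, ← sum_const]
  refine sum_le_sum fun A hA => ?_
  have hwA : 0 ≤ ∑ x ∈ A, w x := sum_nonneg fun x _ => hw x
  have hcard : (#A : ℝ) ≤ Fintype.card X := by exact_mod_cast A.card_le_univ
  refine div_le_of_le_mul₀ hwA (by positivity) ?_
  calc (1 / 2) * ∑ p ∈ A.offDiag, d p.1 p.2 ^ 2 * w p.1 * w p.2
      ≤ (1 / 2) * ∑ p ∈ A.offDiag, M * w p.1 * w p.2 := by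
        gcongr with p
        exacts [hw _, hw _, hM _ _]
    _ = (1 / 2) * M * ∑ p ∈ A.offDiag, w p.1 * w p.2 := by
        simp only [mul_sum, mul_assoc]
    _ ≤ (1 / 2) * M * (2 * #A * ∑ x ∈ A, w x) := by
        gcongr
        exact sum_offDiag_mul_le A w (fun x _ => hw x) (hone A hA)
    _ = M * #A * ∑ x ∈ A, w x := by ring
    _ ≤ M * Fintype.card X * ∑ x ∈ A, w x := by gcongr

/-- with weight `W ≥ 1` on the points of `S` and weight `1` elsewhere, any
k-clustering in which the elements of `S` lie in pairwise distinct clusters has k-means cost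
at most `k · m₂ · (n + n²/W)`, where `n = |X| ≥ 3` and `m₂ = max_{x,y} d(x,y)²`. -/
theorem kmeansCost_upper_bound_of_separated
    {X : Type*} [Fintype X] [DecidableEq X]
    (d : X → X → ℝ)
    (hn : 3 ≤ Fintype.card X)
    (k : ℕ)
    (S : Finset X)
    (C : Finset (Finset X)) (hC : IsClustering C k)
    (hsep : ∀ x ∈ S, ∀ y ∈ S, x ≠ y → ¬ SameCluster C x y)
    (W : ℝ) (hW : 1 ≤ W) :
    kmeansCost C (fun z => if z ∈ S then W else 1) d
      ≤ (k : ℝ) *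
          ((Finset.univ : Finset (X × X)).sup'
            (by
              have : Nonempty X := Fintype.card_pos_iff.mp (by omega)
              exact Finset.univ_nonempty)
            (fun p => d p.1 p.2 ^ 2)) *
          ((Fintype.card X : ℝ) + (Fintype.card X : ℝ) ^ 2 / W) := by
  set M := (Finset.univ : Finset (X × X)).sup' _ (fun p => d p.1 p.2 ^ 2)
  have hM (x y : X) : d x y ^ 2 ≤ M := le_sup' (fun p : X × X => d p.1 p.2 ^ 2) (mem_univ (x, y))
  obtain ⟨x₀⟩ : Nonempty X := Fintype.card_pos_iff.mp (by omega)
  have hM0 : 0 ≤ M := (sq_nonneg _).trans (hM x₀ x₀)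
  have hone : ∀ A ∈ C, ∀ x ∈ A, ∀ y ∈ A, x ≠ y →
      (if x ∈ S then W else 1) = 1 ∨ (if y ∈ S then W else 1) = 1 := by
    intro A hA x hx y hy hne
    by_cases hxS : x ∈ S
    · by_cases hyS : y ∈ S
      · exact absurd ⟨A, hA, hx, hy⟩ (hsep x hxS y hyS hne)
      · simp [hyS]
    · simp [hxS]
  calc kmeansCost C (fun z => if z ∈ S then W else 1) d
      ≤ #C * M * Fintype.card X :=
        kmeansCost_le_of_weight_eq_one_or_eq_one C _ d M (fun z => by split_ifs <;> linarith)
          hM0 hM hone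
    _ ≤ k * M * (Fintype.card X + (Fintype.card X : ℝ) ^ 2 / W) := by
        rw [hC.1]
        gcongr
        exact le_add_of_nonneg_right (by positivity)
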